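/- arXiv:1606.01156 — 5 statements merged into one kernel-verified Lean document; each statement's English description precedes it below -/
import Mathlib

section
/- Let N ≥ 1, let w and w̃ be probability vectors of length N with α := ∑ i, min (w i) (w̃ i) < 1, and let P* be the index-coupled matrix. Then for every i one has (w i − min (w i) (w̃ i)) · (w̃ i − min (w i) (w̃ i)) = 0, hence P* i i = min (w i) (w̃ i), so trace P* = ∑ i, min (w i) (w̃ i); moreover every P ∈ J(w,w̃) satisfies trace P ≤ ∑ i, min (w i) (w̃ i), so P* has maximal trace among all matrices in J(w,w̃). -/
open Finset

/-- The index-coupled matrix `P⋆` built from probability vectors `w, v` (with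
`α = ∑ i, min (w i) (v i) < 1`) has diagonal entries `min (w i) (v i)` (since
`(w i - min (w i) (v i)) * (v i - min (w i) (v i)) = 0`), hence trace
`∑ i, min (w i) (v i)`; moreover every coupling `P ∈ J(w, v)` has trace at most
`∑ i, min (w i) (v i)`, so `P⋆` has maximal trace among matrices in `J(w, v)`. -/
theorem indexCoupled_maximal_trace (N : ℕ) (hN : 1 ≤ N) (w v : Fin N → ℝ)
    (hw_nonneg : ∀ i, 0 ≤ w i) (hw_sum : ∑ i, w i = 1)
    (hv_nonneg : ∀ i, 0 ≤ v i) (hv_sum : ∑ i, v i = 1)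
    (hα : ∑ i, min (w i) (v i) < 1)
    (Pstar : Matrix (Fin N) (Fin N) ℝ)
    (hPstar_def : ∀ i j, Pstar i j = (if i = j then min (w i) (v i) else 0)
      + (w i - min (w i) (v i)) * (v j - min (w j) (v j)) / (1 - ∑ k, min (w k) (v k))) :
    (∀ i, (w i - min (w i) (v i)) * (v i - min (w i) (v i)) = 0)
    ∧ (∀ i, Pstar i i = min (w i) (v i))
    ∧ Matrix.trace Pstar = ∑ i, min (w i) (v i)
    ∧ ∀ P : Matrix (Fin N) (Fin N) ℝ,
        (∀ i j, 0 ≤ P i j) → (∀ i, ∑ j, P i j = w i) → (∀ j, ∑ i, P i j = v j) →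
        Matrix.trace P ≤ ∑ i, min (w i) (v i) := by
  have hzero : ∀ i, (w i - min (w i) (v i)) * (v i - min (w i) (v i)) = 0 := by
    intro i
    rcases min_cases (w i) (v i) with ⟨h, _⟩ | ⟨h, _⟩
    · rw [h]; ring
    · rw [h]; ring
  have hdiag : ∀ i, Pstar i i = min (w i) (v i) := by
    intro i
    rw [hPstar_def i i, if_pos rfl, hzero i]
    simp
  refine ⟨hzero, hdiag, ?_, ?_⟩
  · unfold Matrix.trace Matrix.diag
    exact Finset.sum_congr rfl fun i _ => hdiag i
  · intro P hP hrow hcol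
    unfold Matrix.trace Matrix.diag
    apply Finset.sum_le_sum
    intro i _
    refine le_min ?_ ?_
    · rw [← hrow i]
      exact Finset.single_le_sum (fun j _ => hP i j) (mem_univ i)
    · rw [← hcol i]
      exact Finset.single_le_sum (fun j _ => hP j i) (mem_univ i)
end

section
/- Let N ≥ 1, let w and w̃ be probability vectors of length N with α := ∑ i, min (w i) (w̃ i) < 1, and let P* be the index-coupled matrix. Then for every index i, P* i i ≥ (w i) · (w̃ i); that is, the index-coupled resampling matrix satisfies the diagonal lower bound of Assumption 2. -/
open Finset

/-- The index-coupled matrix built from probability vectors `w, v` (with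
`α = ∑ i, min (w i) (v i) < 1`) satisfies the diagonal lower bound of Assumption 2:
`P⋆ i i ≥ w i * v i` for every `i`. -/
theorem indexCoupled_diag_ge_prod (N : ℕ) (hN : 1 ≤ N) (w v : Fin N → ℝ)
    (hw_nonneg : ∀ i, 0 ≤ w i) (hw_sum : ∑ i, w i = 1)
    (hv_nonneg : ∀ i, 0 ≤ v i) (hv_sum : ∑ i, v i = 1)
    (hα : ∑ i, min (w i) (v i) < 1)
    (Pstar : Matrix (Fin N) (Fin N) ℝ)
    (hPstar_def : ∀ i j, Pstar i j = (if i = j then min (w i) (v i) else 0)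
      + (w i - min (w i) (v i)) * (v j - min (w j) (v j)) / (1 - ∑ k, min (w k) (v k))) :
    ∀ i, w i * v i ≤ Pstar i i := by
  intro i
  have hw1 : w i ≤ 1 := hw_sum ▸ single_le_sum (fun j _ => hw_nonneg j) (mem_univ i)
  have hv1 : v i ≤ 1 := hv_sum ▸ single_le_sum (fun j _ => hv_nonneg j) (mem_univ i)
  have hmin : w i * v i ≤ min (w i) (v i) := by
    rcases le_total (w i) (v i) with h | h
    · rw [min_eq_left h]
      nlinarith [hw_nonneg i]
    · rw [min_eq_right h]
      nlinarith [hv_nonneg i]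
  have hzero : (w i - min (w i) (v i)) * (v i - min (w i) (v i)) = 0 := by
    rcases le_total (w i) (v i) with h | h
    · rw [min_eq_left h]; ring
    · rw [min_eq_right h]; ring
  rw [hPstar_def i i, if_pos rfl, hzero, zero_div, add_zero]
  exact hmin
end

section
/- Let (Ω, F, ℙ) be a probability space, δ > 0, ε ∈ (0,1), C < ∞, n₀ ∈ ℕ, and p ∈ (0,1) with (1 − ε)^(δ/(2+δ)) < 1 − p. Let τ : Ω → ℕ ∪ {∞} be measurable with ℙ(τ > n) ≤ (1 − ε)^(n−1) for all n ≥ 1, and let (Δₙ)_{n≥0} be real random variables with E[|Δₙ|^(2+δ)] < ∞ for all n, with Δₙ = 0 almost surely on {τ ≤ n} for all n ≥ 1, and with E[|Δₙ|^(2+δ)] ≤ C for all n ≥ n₀. Let G be a random variable, independent of the σ-algebra generated by (Δₙ)_{n≥0}, with ℙ(G = n) = (1 − p)^n · p for n ∈ {0,1,2,…}, so that ℙ(n ≤ G) = (1 − p)^n. Define Zₘ = ∑_{n=0}^{m} Δₙ · 1{n ≤ G} / (1 − p)^n. Then (Zₘ)_{m≥0} is a Cauchy sequence in L²(ℙ):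 sup_{m'≥m} E[(Z_{m'} − Zₘ)²] → 0 as m → ∞. -/
/-!
With `aₙ = Δₙ 1{n ≤ G} / (1 - p)ⁿ` we have `Z_{m'} - Zₘ = ∑_{m < n ≤ m'} aₙ`. Independence and
`ℙ(n ≤ G) = (1 - p)ⁿ` give `E[aₙ²] = E[Δₙ²] / (1 - p)ⁿ`. Since `Δₙ` vanishes off `{τ > n}`,
Hölder's inequality with exponents `(2 + δ)/2` and `(2 + δ)/δ` gives
`E[Δₙ²] ≤ C^(2/(2+δ)) rⁿ⁻¹` with `r = (1 - ε)^(δ/(2+δ))`, so `E[aₙ²] ≤ K sⁿ` with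
`s = r / (1 - p) < 1`. The weighted Cauchy–Schwarz inequality
`(∑ aₙ)² ≤ (∑ σⁿ) (∑ aₙ² / σⁿ)` with `σ = √s` then bounds `E[(Z_{m'} - Zₘ)²]` by
`K σ^(2(m+1)) / (1 - σ)²`.
-/

open MeasureTheory ProbabilityTheory Filter

section

variable {Ω : Type*} [MeasurableSpace Ω] {μ : Measure Ω}

theorem integral_sq_le_of_ae_eq_zero_off [IsFiniteMeasure μ] {f : Ω → ℝ}
    (hf : AEStronglyMeasurable f μ) {q : ℝ} (hq : 2 < q)
    (hint : Integrable (fun ω => |f ω| ^ q) μ) {A : Set Ω} (hA : MeasurableSet A)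
    (hfA : ∀ᵐ ω ∂μ, ω ∉ A → f ω = 0) {C t : ℝ} (hC : ∫ ω, |f ω| ^ q ∂μ ≤ C)
    (ht : μ.real A ≤ t) :
    ∫ ω, f ω ^ 2 ∂μ ≤ C ^ (2 / q) * t ^ ((q - 2) / q) := by
  have hq0 : 0 < q := by linarith
  have hconj : (q / 2).HolderConjugate (q / (q - 2)) :=
    Real.holderConjugate_iff.2 ⟨by linarith, by field_simp; ring⟩
  have hpow : ∀ x : ℝ, (x ^ 2) ^ (q / 2) = |x| ^ q := fun x => by
    rw [← sq_abs, ← Real.rpow_natCast, ← Real.rpow_mul (abs_nonneg x)]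
    norm_num [mul_div_cancel₀]
  have hf2 : MemLp (fun ω => f ω ^ 2) (ENNReal.ofReal (q / 2)) μ := by
    refine (integrable_norm_rpow_iff (hf.pow 2) (by simp; linarith) ENNReal.ofReal_ne_top).1 ?_
    refine hint.congr (ae_of_all _ fun ω => ?_)
    simp [ENNReal.toReal_ofReal (by positivity : 0 ≤ q / 2), hpow]
  have hind : MemLp (A.indicator (fun _ => (1 : ℝ))) (ENNReal.ofReal (q / (q - 2))) μ :=
    memLp_indicator_const _ hA (1 : ℝ) (Or.inr (measure_ne_top μ A))
  have hind_pow : ∀ ω, A.indicator (fun _ => (1 : ℝ)) ω ^ (q / (q - 2))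
      = A.indicator (fun _ => (1 : ℝ)) ω := fun ω => by
    by_cases h : ω ∈ A <;> simp [h, Real.zero_rpow hconj.symm.ne_zero]
  have holder := integral_mul_le_Lp_mul_Lq_of_nonneg hconj
    (ae_of_all _ fun ω => sq_nonneg (f ω))
    (ae_of_all _ fun ω => Set.indicator_nonneg (fun _ _ => zero_le_one) ω) hf2 hind
  simp only [hpow, hind_pow, integral_indicator_const _ hA, smul_eq_mul, mul_one] at holder
  calc ∫ ω, f ω ^ 2 ∂μ = ∫ ω, f ω ^ 2 * A.indicator (fun _ => (1 : ℝ)) ω ∂μ := by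
        refine integral_congr_ae (hfA.mono fun ω hω => ?_)
        by_cases h : ω ∈ A <;> simp [h, hω]
    _ ≤ (∫ ω, |f ω| ^ q ∂μ) ^ (1 / (q / 2)) * μ.real A ^ (1 / (q / (q - 2))) := holder
    _ ≤ C ^ (2 / q) * t ^ ((q - 2) / q) := by
        rw [one_div_div, one_div_div]
        have hC0 : 0 ≤ C := (integral_nonneg fun ω => by positivity).trans hC
        gcongr

theorem integral_sq_le_of_tail [IsFiniteMeasure μ] {f : Ω → ℝ}
    (hf : AEStronglyMeasurable f μ) {δ : ℝ} (hδ : 0 < δ)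
    (hint : Integrable (fun ω => |f ω| ^ ((2 : ℝ) + δ)) μ) {C : ℝ}
    (hC : ∫ ω, |f ω| ^ ((2 : ℝ) + δ) ∂μ ≤ C) {τ : Ω → ℕ∞} (hτ : Measurable τ) {n : ℕ}
    (hvanish : ∀ᵐ ω ∂μ, τ ω ≤ n → f ω = 0) {ε : ℝ} (hε : ε ≤ 1)
    (htail : μ {ω | (n : ℕ∞) < τ ω} ≤ ENNReal.ofReal ((1 - ε) ^ (n - 1))) :
    ∫ ω, f ω ^ 2 ∂μ ≤ C ^ (2 / (2 + δ)) * ((1 - ε) ^ (δ / (2 + δ))) ^ (n - 1) := by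
  have hε' : 0 ≤ 1 - ε := by linarith
  have h := integral_sq_le_of_ae_eq_zero_off hf (by linarith) hint
    (hτ (MeasurableSet.of_discrete (s := Set.Ioi (n : ℕ∞))))
    (hvanish.mono fun ω h hA => h (not_lt.1 hA)) hC
    (ENNReal.toReal_le_of_le_ofReal (pow_nonneg hε' _) htail)
  rwa [add_sub_cancel_left, ← Real.rpow_pow_comm hε'] at h

theorem measure_le_eq_pow_of_geometric [IsProbabilityMeasure μ] {G : Ω → ℕ} (hG : Measurable G)
    {p : ℝ} (hp : p ≤ 1) (hGgeom : ∀ n : ℕ, μ {ω | G ω = n} = ENNReal.ofReal ((1 - p) ^ n * p))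
    (j : ℕ) : μ {ω | j ≤ G ω} = ENNReal.ofReal ((1 - p) ^ j) := by
  have tail : ∀ j : ℕ, μ {ω | j ≤ G ω} = ∑' i : ℕ, μ {ω | G ω = j + i} := by
    intro j
    have hunion : {ω | j ≤ G ω} = ⋃ i : ℕ, {ω | G ω = j + i} := by
      ext ω
      simp only [Set.mem_ofPred_eq, Set.mem_iUnion]
      exact ⟨fun h => ⟨G ω - j, by omega⟩, by rintro ⟨i, hi⟩; omega⟩
    refine hunion ▸ measure_iUnion (fun i k hik => Set.disjoint_left.2 fun ω h1 h2 =>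
      hik (Nat.add_left_cancel ((show G ω = j + i from h1).symm.trans h2)))
      fun i => hG (measurableSet_singleton (j + i))
  have total : ∑' i : ℕ, μ {ω | G ω = i} = 1 := by
    simpa using (tail 0).symm
  -- memorylessness: `ℙ(G = j + i) = (1 - p)^j ℙ(G = i)`
  calc μ {ω | j ≤ G ω} = ∑' i : ℕ, ENNReal.ofReal ((1 - p) ^ j) * μ {ω | G ω = i} := by
        rw [tail]
        congr 1 with i
        rw [hGgeom, hGgeom, ← ENNReal.ofReal_mul (pow_nonneg (by linarith) _), pow_add, mul_assoc]
    _ = ENNReal.ofReal ((1 - p) ^ j) := by rw [ENNReal.tsum_mul_left, total, mul_one]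

theorem integral_sq_mul_ite_of_indepFun {X : Ω → ℝ} {G : Ω → ℕ} (hXG : IndepFun X G μ)
    (hX : AEStronglyMeasurable X μ) (hG : Measurable G) (n : ℕ) :
    ∫ ω, (X ω * if n ≤ G ω then 1 else 0) ^ 2 ∂μ
      = (∫ ω, X ω ^ 2 ∂μ) * μ.real {ω | n ≤ G ω} := by
  have hψ : Measurable fun i : ℕ => if n ≤ i then (1 : ℝ) else 0 := measurable_of_countable _
  have hind : IndepFun (fun ω => X ω ^ 2) (fun ω => if n ≤ G ω then (1 : ℝ) else 0) μ :=
    hXG.comp (φ := fun x : ℝ => x ^ 2) (by fun_prop) hψ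
  have hite : ∫ ω, (if n ≤ G ω then (1 : ℝ) else 0) ∂μ
      = ∫ ω, {ω | n ≤ G ω}.indicator (fun _ => (1 : ℝ)) ω ∂μ := by
    congr 1 with ω
    simp [Set.indicator_apply]
  calc ∫ ω, (X ω * if n ≤ G ω then 1 else 0) ^ 2 ∂μ
      = ∫ ω, X ω ^ 2 * if n ≤ G ω then 1 else 0 ∂μ := by
        congr 1 with ω
        split_ifs <;> ring
    _ = (∫ ω, X ω ^ 2 ∂μ) * ∫ ω, if n ≤ G ω then 1 else 0 ∂μ :=
        hind.integral_mul_eq_mul_integral (hX.pow 2) (hψ.comp hG).aestronglyMeasurable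
    _ = (∫ ω, X ω ^ 2 ∂μ) * μ.real {ω | n ≤ G ω} := by
        rw [hite, integral_indicator_const (s := {ω | n ≤ G ω}) _ (hG measurableSet_Ici),
          smul_eq_mul, mul_one]

theorem integral_sq_mul_ite_div_of_geometric [IsProbabilityMeasure μ] {X : Ω → ℝ} {G : Ω → ℕ}
    (hXG : IndepFun X G μ) (hX : AEStronglyMeasurable X μ) (hG : Measurable G) {p : ℝ}
    (hp : p < 1) (hGgeom : ∀ n : ℕ, μ {ω | G ω = n} = ENNReal.ofReal ((1 - p) ^ n * p))
    (n : ℕ) :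
    ∫ ω, (X ω * (if n ≤ G ω then 1 else 0) / (1 - p) ^ n) ^ 2 ∂μ
      = (∫ ω, X ω ^ 2 ∂μ) / (1 - p) ^ n := by
  have hp' : 0 < 1 - p := by linarith
  simp only [div_pow]
  rw [integral_div, integral_sq_mul_ite_of_indepFun hXG hX hG, measureReal_def,
    measure_le_eq_pow_of_geometric hG hp.le hGgeom, ENNReal.toReal_ofReal (by positivity)]
  field_simp

theorem MeasureTheory.Integrable.sq_mul_ite_div {X : Ω → ℝ} {G : Ω → ℕ}
    (hX : Integrable (fun ω => X ω ^ 2) μ) (hG : Measurable G) (n : ℕ) (c : ℝ) :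
    Integrable (fun ω => (X ω * (if n ≤ G ω then 1 else 0) / c) ^ 2) μ := by
  refine ((hX.indicator (hG (measurableSet_Ici (a := n)))).div_const (c ^ 2)).congr
    (ae_of_all _ fun ω => ?_)
  by_cases h : n ≤ G ω <;> simp [h, div_pow]

theorem integral_sq_finset_sum_le {ι : Type*} (s : Finset ι) {f : ι → Ω → ℝ} {w : ι → ℝ}
    (hw : ∀ i ∈ s, 0 < w i) (hf : ∀ i ∈ s, Integrable (fun ω => f i ω ^ 2) μ) :
    ∫ ω, (∑ i ∈ s, f i ω) ^ 2 ∂μ ≤ (∑ i ∈ s, w i) * ∑ i ∈ s, (∫ ω, f i ω ^ 2 ∂μ) / w i := by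
  rcases s.eq_empty_or_nonempty with rfl | hs
  · simp
  have hpointwise : ∀ ω, (∑ i ∈ s, f i ω) ^ 2 ≤ (∑ i ∈ s, w i) * ∑ i ∈ s, f i ω ^ 2 / w i :=
    fun ω => (div_le_iff₀' (Finset.sum_pos hw hs)).1 (Finset.sq_sum_div_le_sum_sq_div s _ hw)
  calc ∫ ω, (∑ i ∈ s, f i ω) ^ 2 ∂μ
      ≤ ∫ ω, (∑ i ∈ s, w i) * ∑ i ∈ s, f i ω ^ 2 / w i ∂μ :=
        integral_mono_of_nonneg (ae_of_all _ fun ω => sq_nonneg _)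
          ((integrable_finsetSum _ fun i hi => (hf i hi).div_const _).const_mul _)
          (ae_of_all _ hpointwise)
    _ = (∑ i ∈ s, w i) * ∑ i ∈ s, (∫ ω, f i ω ^ 2 ∂μ) / w i := by
        rw [integral_const_mul, integral_finsetSum _ fun i hi => (hf i hi).div_const _]
        simp only [integral_div]

theorem exists_integral_sq_sum_Ico_lt {f : ℕ → Ω → ℝ} {K s : ℝ} {N : ℕ} (hs0 : 0 < s)
    (hs1 : s < 1) (hf : ∀ n, N ≤ n → Integrable (fun ω => f n ω ^ 2) μ)
    (hbound : ∀ n, N ≤ n → ∫ ω, f n ω ^ 2 ∂μ ≤ K * s ^ n) {η : ℝ} (hη : 0 < η) :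
    ∃ M, ∀ m m', M ≤ m → ∫ ω, (∑ n ∈ Finset.Ico m m', f n ω) ^ 2 ∂μ < η := by
  set σ := Real.sqrt s
  have hσ0 : 0 < σ := Real.sqrt_pos.2 hs0
  have hσ1 : σ < 1 := (Real.sqrt_lt' one_pos).2 (by simpa using hs1)
  have hK : 0 ≤ K := nonneg_of_mul_nonneg_left
    ((integral_nonneg fun ω => sq_nonneg _).trans (hbound N le_rfl)) (pow_pos hs0 N)
  have hlim : Tendsto (fun m : ℕ => K * (σ ^ m / (1 - σ)) ^ 2) atTop (nhds 0) := by
    simpa using ((tendsto_pow_atTop_nhds_zero_of_lt_one hσ0.le hσ1).div_const (1 - σ)).pow 2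
      |>.const_mul K
  obtain ⟨M, hM⟩ := eventually_atTop.1 (hlim.eventually (gt_mem_nhds hη))
  refine ⟨max M N, fun m m' hm => lt_of_le_of_lt ?_ (hM m (le_of_max_le_left hm))⟩
  have hmN : N ≤ m := le_of_max_le_right hm
  calc ∫ ω, (∑ n ∈ Finset.Ico m m', f n ω) ^ 2 ∂μ
      ≤ (∑ n ∈ Finset.Ico m m', σ ^ n) * ∑ n ∈ Finset.Ico m m', (∫ ω, f n ω ^ 2 ∂μ) / σ ^ n :=
        integral_sq_finset_sum_le _ (fun n _ => pow_pos hσ0 n)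
          fun n hn => hf n (hmN.trans (Finset.mem_Ico.1 hn).1)
    _ ≤ (∑ n ∈ Finset.Ico m m', σ ^ n) * ∑ n ∈ Finset.Ico m m', K * σ ^ n := by
        gcongr with n hn
        rw [div_le_iff₀ (pow_pos hσ0 n), mul_assoc, ← mul_pow, Real.mul_self_sqrt hs0.le]
        exact hbound n (hmN.trans (Finset.mem_Ico.1 hn).1)
    _ = K * (∑ n ∈ Finset.Ico m m', σ ^ n) ^ 2 := by rw [← Finset.mul_sum]; ring
    _ ≤ K * (σ ^ m / (1 - σ)) ^ 2 := by
        gcongr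
        exact geom_sum_Ico_le_of_lt_one hσ0.le hσ1

end

theorem rheeGlynn_cauchy_L2_general {Ω : Type*} [MeasurableSpace Ω]
    (μ : Measure Ω) [IsProbabilityMeasure μ]
    (δ : ℝ) (hδ : 0 < δ) (ε : ℝ) (hε1 : ε < 1)
    (C : ℝ) (n₀ : ℕ) (p : ℝ) (hp1 : p < 1)
    (hpε : (1 - ε) ^ (δ / (2 + δ)) < 1 - p)
    (τ : Ω → ℕ∞) (hτ : Measurable τ)
    (hτtail : ∀ n : ℕ, 1 ≤ n → μ {ω | (n : ℕ∞) < τ ω} ≤ ENNReal.ofReal ((1 - ε) ^ (n - 1)))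
    (Δ : ℕ → Ω → ℝ) (hΔmeas : ∀ n, Measurable (Δ n))
    (hΔmom : ∀ n, Integrable (fun ω => |Δ n ω| ^ ((2 : ℝ) + δ)) μ)
    (hΔvanish : ∀ n : ℕ, 1 ≤ n → ∀ᵐ ω ∂μ, τ ω ≤ (n : ℕ∞) → Δ n ω = 0)
    (hΔbound : ∀ n, n₀ ≤ n → ∫ ω, |Δ n ω| ^ ((2 : ℝ) + δ) ∂μ ≤ C)
    (G : Ω → ℕ) (hG : Measurable G)
    (hGgeom : ∀ n : ℕ, μ {ω | G ω = n} = ENNReal.ofReal ((1 - p) ^ n * p))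
    (hGindep : Indep (MeasurableSpace.comap G inferInstance)
      (⨆ n : ℕ, MeasurableSpace.comap (Δ n) inferInstance) μ)
    (Z : ℕ → Ω → ℝ)
    (hZ_def : ∀ m ω, Z m ω
      = ∑ n ∈ Finset.range (m + 1), Δ n ω * (if n ≤ G ω then 1 else 0) / (1 - p) ^ n) :
    ∀ η : ℝ, 0 < η → ∃ M : ℕ, ∀ m m' : ℕ, M ≤ m → m ≤ m' →
      ∫ ω, (Z m' ω - Z m ω) ^ 2 ∂μ < η := by
  intro η hη
  set r := (1 - ε) ^ (δ / (2 + δ))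
  have hp : 0 < 1 - p := by linarith
  have hr : 0 < r := Real.rpow_pos_of_pos (by linarith) _
  have hindep : ∀ n, IndepFun (Δ n) G μ := fun n => (IndepFun_iff_Indep _ _ _).2 <|
    indep_of_indep_of_le_left hGindep.symm (le_iSup (fun n => MeasurableSpace.comap (Δ n) _) n)
  have hsq : ∀ n, Integrable (fun ω => Δ n ω ^ 2) μ := fun n =>
    (integrable_norm_rpow_of_le (hΔmeas n).aestronglyMeasurable zero_le_two (by positivity)
      (by linarith) (hΔmom n)).congr (ae_of_all _ fun ω => by simp)
  have hbound : ∀ n, max n₀ 1 ≤ n →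
      ∫ ω, (Δ n ω * (if n ≤ G ω then 1 else 0) / (1 - p) ^ n) ^ 2 ∂μ
        ≤ C ^ (2 / (2 + δ)) / r * (r / (1 - p)) ^ n := by
    intro n hn
    obtain ⟨k, rfl⟩ : ∃ k, n = k + 1 := ⟨n - 1, by omega⟩
    rw [integral_sq_mul_ite_div_of_geometric (hindep _) (hΔmeas _).aestronglyMeasurable hG hp1
      hGgeom, div_le_iff₀ (pow_pos hp _)]
    calc ∫ ω, Δ (k + 1) ω ^ 2 ∂μ ≤ C ^ (2 / (2 + δ)) * r ^ k :=
          integral_sq_le_of_tail (hΔmeas _).aestronglyMeasurable hδ (hΔmom _)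
            (hΔbound _ (le_of_max_le_left hn)) hτ (hΔvanish _ (le_of_max_le_right hn)) hε1.le
            (hτtail _ (le_of_max_le_right hn))
      _ = C ^ (2 / (2 + δ)) / r * (r / (1 - p)) ^ (k + 1) * (1 - p) ^ (k + 1) := by
        rw [div_pow, pow_succ r]
        field_simp
  obtain ⟨M, hM⟩ := exists_integral_sq_sum_Ico_lt (div_pos hr hp) ((div_lt_one hp).2 hpε)
    (fun n _ => (hsq n).sq_mul_ite_div hG n _) hbound hη
  refine ⟨M, fun m m' hm hmm' => ?_⟩
  have hZ : ∀ ω, Z m' ω - Z m ω = ∑ n ∈ Finset.Ico (m + 1) (m' + 1),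
      Δ n ω * (if n ≤ G ω then 1 else 0) / (1 - p) ^ n := fun ω => by
    rw [hZ_def, hZ_def, Finset.sum_Ico_eq_sub _ (by omega)]
  simpa only [hZ] using hM (m + 1) (m' + 1) (by omega)

/-- The truncated partial sums `Zₘ = ∑_{n=0}^m Δₙ 1{n ≤ G} / (1-p)^n` of the generalized
Rhee--Glynn estimator form a Cauchy sequence in `L²(ℙ)`, under the tail bound
`ℙ(τ > n) ≤ (1-ε)^(n-1)`, the vanishing of `Δₙ` on `{τ ≤ n}`, uniformly bounded
`(2+δ)`-moments for large `n`, and a Geometric truncation variable `G`, independent of the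
σ-algebra generated by `(Δₙ)`, with parameter `p` satisfying
`(1-ε)^(δ/(2+δ)) < 1 - p`. -/
theorem rheeGlynn_cauchy_L2 {Ω : Type*} [MeasurableSpace Ω]
    (μ : Measure Ω) [IsProbabilityMeasure μ]
    (δ : ℝ) (hδ : 0 < δ) (ε : ℝ) (hε0 : 0 < ε) (hε1 : ε < 1)
    (C : ℝ) (n₀ : ℕ) (p : ℝ) (hp0 : 0 < p) (hp1 : p < 1)
    (hpε : (1 - ε) ^ (δ / (2 + δ)) < 1 - p)
    (τ : Ω → ℕ∞) (hτ : Measurable τ)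
    (hτtail : ∀ n : ℕ, 1 ≤ n → μ {ω | (n : ℕ∞) < τ ω} ≤ ENNReal.ofReal ((1 - ε) ^ (n - 1)))
    (Δ : ℕ → Ω → ℝ) (hΔmeas : ∀ n, Measurable (Δ n))
    (hΔmom : ∀ n, Integrable (fun ω => |Δ n ω| ^ ((2 : ℝ) + δ)) μ)
    (hΔvanish : ∀ n : ℕ, 1 ≤ n → ∀ᵐ ω ∂μ, τ ω ≤ (n : ℕ∞) → Δ n ω = 0)
    (hΔbound : ∀ n, n₀ ≤ n → ∫ ω, |Δ n ω| ^ ((2 : ℝ) + δ) ∂μ ≤ C)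
    (G : Ω → ℕ) (hG : Measurable G)
    (hGgeom : ∀ n : ℕ, μ {ω | G ω = n} = ENNReal.ofReal ((1 - p) ^ n * p))
    (hGindep : Indep (MeasurableSpace.comap G inferInstance)
      (⨆ n : ℕ, MeasurableSpace.comap (Δ n) inferInstance) μ)
    (Z : ℕ → Ω → ℝ)
    (hZ_def : ∀ m ω, Z m ω
      = ∑ n ∈ Finset.range (m + 1), Δ n ω * (if n ≤ G ω then 1 else 0) / (1 - p) ^ n) :
    ∀ η : ℝ, 0 < η → ∃ M : ℕ, ∀ m m' : ℕ, M ≤ m → m ≤ m' →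
      ∫ ω, (Z m' ω - Z m ω) ^ 2 ∂μ < η :=
  rheeGlynn_cauchy_L2_general μ δ hδ ε hε1 C n₀ p hp1 hpε τ hτ hτtail Δ hΔmeas hΔmom hΔvanish
    hΔbound G hG hGgeom hGindep Z hZ_def
end

section
/- Let (Ω, F, ℙ) be a probability space, δ > 0, ε ∈ (0,1), C < ∞, n₀ ∈ ℕ, and p ∈ (0,1) with (1 − ε)^(δ/(2+δ)) < 1 − p. Let τ : Ω → ℕ ∪ {∞} be measurable with ℙ(τ > n) ≤ (1 − ε)^(n−1) for all n ≥ 1, and let (Δₙ)_{n≥0} be real random variables with E[|Δₙ|^(2+δ)] < ∞ for all n, with Δₙ = 0 almost surely on {τ ≤ n} for all n ≥ 1, and with E[|Δₙ|^(2+δ)] ≤ C for all n ≥ n₀. Let G be a random variable, independent of the σ-algebra generated by (Δₙ)_{n≥0}, with ℙ(G = n) = (1 − p)^n · p for n ∈ {0,1,2,…}. Then the random variable H = ∑_{n=0}^{G} Δₙ / (1 − p)^n (an almost surely finite sum) is square-integrable, the partial sums Zₘ = ∑_{n=0}^{m} Δₙ · 1{n ≤ G} / (1 − p)^n converge to H almost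 surely and in L²(ℙ), E[H] = ∑_{n=0}^{∞} E[Δₙ] (the series converging absolutely), and E[H²] = ∑_{n=0}^{∞} (1 − p)^{−n} · ( E[Δₙ²] + 2 ∑_{ℓ=n+1}^{∞} E[Δₙ · Δ_ℓ] ) < ∞. -/
/-!
Write `f n = Δ n · 1{n ≤ G} / (1 - p)^n`, so that `Z m = ∑_{n ≤ m} f n` and, pointwise,
`H = ∑_n f n` (a finite sum). Independence of `G` from the `Δ n` gives
`E[f n f ℓ] = (1 - p)^{-n} E[Δ n Δ ℓ]` for `n ≤ ℓ` and `E[f n] = E[Δ n]`. Since `Δ n` vanishes off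
`{τ > n}`, Hölder's inequality with exponents `(2 + δ)/2` and `(2 + δ)/δ` bounds `E[Δ n²]` by
`C^{2/(2+δ)} r^{n-1}` with `r = (1 - ε)^{δ/(2+δ)} < 1 - p`, so `‖f n‖₂` decays geometrically and
`∑ f n` converges absolutely in `L²`. Its `L²` limit agrees a.e. with the pointwise limit `H`
(along an a.e. convergent subsequence). The mean is then the pairing with `1`, and the second moment
comes from `‖∑ f n‖² = ∑_n (‖f n‖² + 2 ⟪f n, ∑_{ℓ > n} f ℓ⟫)`, obtained by telescoping the squared
norms of the tails `∑_{ℓ ≥ n} f ℓ`.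
-/

open MeasureTheory ProbabilityTheory Filter Topology Finset

section InnerProductSpace

variable {E : Type*} [NormedAddCommGroup E] [InnerProductSpace ℝ E] [CompleteSpace E]

theorem norm_tsum_sq_eq_tsum {F : ℕ → E} (hF : Summable fun n => ‖F n‖) :
    ‖∑' n, F n‖ ^ 2 = ∑' n, (‖F n‖ ^ 2 + 2 * ∑' k, inner ℝ (F n) (F (n + 1 + k))) := by
  have hFs : Summable F := hF.of_norm
  let T : ℕ → E := fun n => ∑' k, F (k + n)
  have hT_succ (n : ℕ) : T n = F n + T (n + 1) := by
    simp only [T, ((summable_nat_add_iff n).mpr hFs).tsum_eq_zero_add, zero_add]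
    congr 2 with k
    ring_nf
  have hT_le (n : ℕ) : ‖T n‖ ≤ ∑' k, ‖F k‖ := by
    have htail : Summable fun k => ‖F (k + n)‖ := (summable_nat_add_iff n).mpr hF
    refine (norm_tsum_le_tsum_norm htail).trans ?_
    exact htail.tsum_le_tsum_of_inj (fun k => k + n) (add_left_injective n)
      (fun _ _ => norm_nonneg _) (fun _ => le_rfl) hF
  have hinner (n : ℕ) : ∑' k, inner ℝ (F n) (F (n + 1 + k)) = inner ℝ (F n) (T (n + 1)) := by
    change _ = innerSL ℝ (F n) (∑' k, F (k + (n + 1)))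
    rw [(innerSL ℝ (F n)).map_tsum ((summable_nat_add_iff (n + 1)).mpr hFs)]
    simp only [innerSL_apply_apply, add_comm]
  have hterm (n : ℕ) : ‖F n‖ ^ 2 + 2 * inner ℝ (F n) (T (n + 1))
      = ‖T n‖ ^ 2 - ‖T (n + 1)‖ ^ 2 := by
    rw [hT_succ n, norm_add_sq_real]
    ring
  have hsum : Summable fun n => ‖T n‖ ^ 2 - ‖T (n + 1)‖ ^ 2 := by
    refine Summable.of_norm_bounded (hF.mul_right (3 * ∑' k, ‖F k‖)) fun n => ?_
    have hFn : ‖F n‖ ≤ ∑' k, ‖F k‖ := hF.le_tsum n fun _ _ => norm_nonneg _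
    have hFT := abs_real_inner_le_norm (F n) (T (n + 1))
    rw [← hterm, Real.norm_eq_abs]
    calc |‖F n‖ ^ 2 + 2 * inner ℝ (F n) (T (n + 1))|
        ≤ ‖F n‖ * ‖F n‖ + 2 * (‖F n‖ * ‖T (n + 1)‖) := by
          rw [← sq]; exact (abs_add_le _ _).trans (by simp [abs_mul, hFT])
      _ ≤ ‖F n‖ * (3 * ∑' k, ‖F k‖) := by
          nlinarith [norm_nonneg (F n), hT_le (n + 1)]
  have hlim : Tendsto (fun N => ∑ n ∈ range N, (‖T n‖ ^ 2 - ‖T (n + 1)‖ ^ 2)) atTop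
      (𝓝 (‖T 0‖ ^ 2)) := by
    simp only [Finset.sum_range_sub']
    simpa using tendsto_const_nhds.sub (((tendsto_sum_nat_add F).norm).pow 2)
  simp only [hinner, hterm]
  rw [((hsum.hasSum_iff_tendsto_nat).mpr hlim).tsum_eq]
  simp [T]

end InnerProductSpace

section L2

variable {Ω : Type*} [MeasurableSpace Ω] {μ : Measure Ω}

theorem MeasureTheory.Lp.ae_eq_of_tendsto_of_ae_tendsto {E : Type*} [NormedAddCommGroup E]
    {p : ENNReal} [Fact (1 ≤ p)] {S : ℕ → Lp E p μ} {A : Lp E p μ} {g : ℕ → Ω → E} {h : Ω → E}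
    (hS : Tendsto S atTop (𝓝 A)) (hSg : ∀ m, S m =ᵐ[μ] g m)
    (hg : ∀ᵐ ω ∂μ, Tendsto (fun m => g m ω) atTop (𝓝 (h ω))) : A =ᵐ[μ] h := by
  obtain ⟨ns, hns, hae⟩ := (tendstoInMeasure_of_tendsto_Lp hS).exists_seq_tendsto_ae
  filter_upwards [hae, ae_all_iff.mpr hSg, hg] with ω hA hSgω hgω
  exact tendsto_nhds_unique (hA.congr fun i => hSgω (ns i)) (hgω.comp hns.tendsto_atTop)

theorem MeasureTheory.L2.inner_eq_integral_mul {x y : Lp ℝ 2 μ} {u v : Ω → ℝ} (hx : x =ᵐ[μ] u)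
    (hy : y =ᵐ[μ] v) : inner ℝ x y = ∫ ω, u ω * v ω ∂μ := by
  rw [L2.inner_def]
  refine integral_congr_ae ?_
  filter_upwards [hx, hy] with ω hxω hyω
  rw [hxω, hyω, Real.inner_apply, mul_comm]

theorem MeasureTheory.L2.norm_sq_eq_integral_sq {x : Lp ℝ 2 μ} {u : Ω → ℝ} (hx : x =ᵐ[μ] u) :
    ‖x‖ ^ 2 = ∫ ω, u ω ^ 2 ∂μ := by
  rw [← real_inner_self_eq_norm_sq, L2.inner_eq_integral_mul hx hx]
  simp only [sq]

theorem MeasureTheory.L2.norm_toLp_eq_sqrt_integral_sq {u : Ω → ℝ} (hu : MemLp u 2 μ) :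
    ‖hu.toLp u‖ = √(∫ ω, u ω ^ 2 ∂μ) := by
  rw [← L2.norm_sq_eq_integral_sq hu.coeFn_toLp, Real.sqrt_sq (norm_nonneg _)]

end L2

section L2Series

variable {Ω : Type*} [MeasurableSpace Ω] {μ : Measure Ω} {f : ℕ → Ω → ℝ} {H : Ω → ℝ}

theorem summable_norm_toLp_of_summable_sqrt (hf : ∀ n, MemLp (f n) 2 μ)
    (hsum : Summable fun n => √(∫ ω, f n ω ^ 2 ∂μ)) :
    Summable fun n => ‖(hf n).toLp (f n)‖ := by
  simpa only [L2.norm_toLp_eq_sqrt_integral_sq] using hsum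

theorem coeFn_sum_toLp (hf : ∀ n, MemLp (f n) 2 μ) (s : Finset ℕ) :
    ⇑(∑ n ∈ s, (hf n).toLp (f n)) =ᵐ[μ] fun ω => ∑ n ∈ s, f n ω := by
  filter_upwards [Lp.coeFn_fun_finsetSum s fun n => (hf n).toLp (f n),
    ae_all_iff.mpr fun n => (hf n).coeFn_toLp] with ω hsumω hfω
  rw [hsumω]
  exact Finset.sum_congr rfl fun n _ => hfω n

theorem hasSum_toLp_of_ae_tendsto_sum (hf : ∀ n, MemLp (f n) 2 μ)
    (hsum : Summable fun n => √(∫ ω, f n ω ^ 2 ∂μ))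
    (hH : ∀ᵐ ω ∂μ, Tendsto (fun m => ∑ n ∈ range m, f n ω) atTop (𝓝 (H ω))) :
    ∃ A : Lp ℝ 2 μ, HasSum (fun n => (hf n).toLp (f n)) A ∧ A =ᵐ[μ] H := by
  obtain ⟨A, hA⟩ := (summable_norm_toLp_of_summable_sqrt hf hsum).of_norm
  exact ⟨A, hA, Lp.ae_eq_of_tendsto_of_ae_tendsto hA.tendsto_sum_nat
    (fun m => coeFn_sum_toLp hf (range m)) hH⟩

theorem memLp_two_of_ae_tendsto_sum (hf : ∀ n, MemLp (f n) 2 μ)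
    (hsum : Summable fun n => √(∫ ω, f n ω ^ 2 ∂μ))
    (hH : ∀ᵐ ω ∂μ, Tendsto (fun m => ∑ n ∈ range m, f n ω) atTop (𝓝 (H ω))) :
    MemLp H 2 μ := by
  obtain ⟨A, -, hAH⟩ := hasSum_toLp_of_ae_tendsto_sum hf hsum hH
  exact (Lp.memLp A).ae_eq hAH

theorem tendsto_integral_sq_sub_of_ae_tendsto_sum (hf : ∀ n, MemLp (f n) 2 μ)
    (hsum : Summable fun n => √(∫ ω, f n ω ^ 2 ∂μ))
    (hH : ∀ᵐ ω ∂μ, Tendsto (fun m => ∑ n ∈ range m, f n ω) atTop (𝓝 (H ω))) :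
    Tendsto (fun m => ∫ ω, (∑ n ∈ range m, f n ω - H ω) ^ 2 ∂μ) atTop (𝓝 0) := by
  obtain ⟨A, hA, hAH⟩ := hasSum_toLp_of_ae_tendsto_sum hf hsum hH
  have hdist (m : ℕ) : ∫ ω, (∑ n ∈ range m, f n ω - H ω) ^ 2 ∂μ
      = ‖∑ n ∈ range m, (hf n).toLp (f n) - A‖ ^ 2 := by
    refine (L2.norm_sq_eq_integral_sq ?_).symm
    filter_upwards [Lp.coeFn_sub (∑ n ∈ range m, (hf n).toLp (f n)) A,
      coeFn_sum_toLp hf (range m), hAH] with ω hsub hsumω hAω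
    rw [hsub, Pi.sub_apply, hsumω, hAω]
  simpa [hdist] using (hA.tendsto_sum_nat.sub_const A).norm.pow 2

theorem summable_abs_integral_of_summable_sqrt [IsFiniteMeasure μ] (hf : ∀ n, MemLp (f n) 2 μ)
    (hsum : Summable fun n => √(∫ ω, f n ω ^ 2 ∂μ)) :
    Summable fun n => |∫ ω, f n ω ∂μ| := by
  have hone : MemLp (fun _ => (1 : ℝ)) 2 μ := memLp_const 1
  refine Summable.of_nonneg_of_le (fun n => abs_nonneg _) (fun n => ?_)
    ((summable_norm_toLp_of_summable_sqrt hf hsum).mul_left ‖hone.toLp _‖)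
  have h := abs_real_inner_le_norm (hone.toLp _) ((hf n).toLp (f n))
  simpa only [L2.inner_eq_integral_mul hone.coeFn_toLp (hf n).coeFn_toLp, one_mul] using h

theorem hasSum_integral_of_ae_tendsto_sum [IsFiniteMeasure μ] (hf : ∀ n, MemLp (f n) 2 μ)
    (hsum : Summable fun n => √(∫ ω, f n ω ^ 2 ∂μ))
    (hH : ∀ᵐ ω ∂μ, Tendsto (fun m => ∑ n ∈ range m, f n ω) atTop (𝓝 (H ω))) :
    HasSum (fun n => ∫ ω, f n ω ∂μ) (∫ ω, H ω ∂μ) := by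
  obtain ⟨A, hA, hAH⟩ := hasSum_toLp_of_ae_tendsto_sum hf hsum hH
  have hone : MemLp (fun _ => (1 : ℝ)) 2 μ := memLp_const 1
  have h := (innerSL ℝ (hone.toLp _)).hasSum hA
  simpa only [innerSL_apply_apply, L2.inner_eq_integral_mul hone.coeFn_toLp (hf _).coeFn_toLp,
    L2.inner_eq_integral_mul hone.coeFn_toLp hAH, one_mul] using h

theorem integral_sq_eq_tsum_of_ae_tendsto_sum (hf : ∀ n, MemLp (f n) 2 μ)
    (hsum : Summable fun n => √(∫ ω, f n ω ^ 2 ∂μ))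
    (hH : ∀ᵐ ω ∂μ, Tendsto (fun m => ∑ n ∈ range m, f n ω) atTop (𝓝 (H ω))) :
    ∫ ω, H ω ^ 2 ∂μ
      = ∑' n, (∫ ω, f n ω ^ 2 ∂μ + 2 * ∑' k, ∫ ω, f n ω * f (n + 1 + k) ω ∂μ) := by
  obtain ⟨A, hA, hAH⟩ := hasSum_toLp_of_ae_tendsto_sum hf hsum hH
  rw [← L2.norm_sq_eq_integral_sq hAH, ← hA.tsum_eq,
    norm_tsum_sq_eq_tsum (summable_norm_toLp_of_summable_sqrt hf hsum)]
  simp only [L2.norm_sq_eq_integral_sq (hf _).coeFn_toLp,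
    L2.inner_eq_integral_mul (hf _).coeFn_toLp (hf _).coeFn_toLp]

end L2Series

theorem measureReal_setOf_le_eq_pow_of_geometric {Ω : Type*} [MeasurableSpace Ω]
    {μ : Measure Ω} {G : Ω → ℕ} (hG : Measurable G) {p : ℝ} (hp0 : 0 < p)
    (hp1 : p ≤ 1) (hGgeom : ∀ n, μ {ω | G ω = n} = ENNReal.ofReal ((1 - p) ^ n * p)) (n : ℕ) :
    μ.real {ω | n ≤ G ω} = (1 - p) ^ n := by
  have hq0 : 0 ≤ 1 - p := by linarith
  have hq1 : 1 - p < 1 := by linarith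
  have hunion : {ω | n ≤ G ω} = ⋃ k : ℕ, {ω | G ω = n + k} := by
    ext ω
    simp only [Set.mem_ofPred_eq, Set.mem_iUnion]
    exact ⟨fun h => ⟨G ω - n, by omega⟩, fun ⟨k, hk⟩ => by omega⟩
  have hdisj : Pairwise (Function.onFun Disjoint fun k : ℕ => {ω | G ω = n + k}) :=
    fun i j hij => Set.disjoint_left.mpr fun ω hi hj => hij (by simp_all)
  have hterm (k : ℕ) : (1 - p) ^ (n + k) * p = (1 - p) ^ n * p * (1 - p) ^ k := by ring
  have hsum : HasSum (fun k : ℕ => (1 - p) ^ (n + k) * p) ((1 - p) ^ n) := by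
    have h := (hasSum_geometric_of_lt_one hq0 hq1).mul_left ((1 - p) ^ n * p)
    rwa [sub_sub_cancel, mul_assoc, mul_inv_cancel₀ hp0.ne', mul_one, ← funext hterm] at h
  rw [measureReal_def, hunion, measure_iUnion hdisj fun k => hG (measurableSet_singleton _)]
  simp only [hGgeom]
  rw [← ENNReal.ofReal_tsum_of_nonneg (fun k => by positivity) hsum.summable, hsum.tsum_eq,
    ENNReal.toReal_ofReal (by positivity)]

theorem integral_ite_le_mul_of_indep {Ω : Type*} {m : MeasurableSpace Ω} [MeasurableSpace Ω]
    {μ : Measure Ω} {G : Ω → ℕ} (hG : Measurable G)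
    (hind : Indep (MeasurableSpace.comap G inferInstance) m μ) {Y : Ω → ℝ}
    (hYm : Measurable[m] Y) (hY : Measurable Y) (n : ℕ) :
    ∫ ω, (if n ≤ G ω then 1 else 0) * Y ω ∂μ = μ.real {ω | n ≤ G ω} * ∫ ω, Y ω ∂μ := by
  have hχ : Measurable[MeasurableSpace.comap G inferInstance]
      fun ω => if n ≤ G ω then (1 : ℝ) else 0 :=
    (measurable_const.ite (measurableSet_le measurable_const (comap_measurable G))
      measurable_const)
  have hindep : IndepFun (fun ω => if n ≤ G ω then (1 : ℝ) else 0) Y μ :=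
    indep_of_indep_of_le_right (indep_of_indep_of_le_left hind hχ.comap_le) hYm.comap_le
  have hχint : ∫ ω, (if n ≤ G ω then (1 : ℝ) else 0) ∂μ = μ.real {ω | n ≤ G ω} := by
    rw [← integral_indicator_one (measurableSet_le measurable_const hG)]
    simp only [Set.indicator_apply, Set.mem_ofPred_eq, Pi.one_apply]
  rw [← hχint, ← hindep.integral_mul_eq_mul_integral
    (hχ.mono hG.comap_le le_rfl).aestronglyMeasurable hY.aestronglyMeasurable]
  rfl

section RheeGlynn

variable {Ω : Type*}

noncomputable def rheeGlynnTerm (Δ : ℕ → Ω → ℝ) (G : Ω → ℕ) (q : ℝ) (n : ℕ) (ω : Ω) : ℝ :=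
  Δ n ω * (if n ≤ G ω then 1 else 0) / q ^ n

variable {Δ : ℕ → Ω → ℝ} {G : Ω → ℕ} {q : ℝ}

theorem sum_range_rheeGlynnTerm_of_lt {ω : Ω} {m : ℕ} (hm : G ω < m) :
    ∑ n ∈ range m, rheeGlynnTerm Δ G q n ω = ∑ n ∈ range (G ω + 1), Δ n ω / q ^ n := by
  rw [← Finset.sum_subset (range_subset_range.mpr hm) fun n _ hn => ?_]
  · refine Finset.sum_congr rfl fun n hn => ?_
    simp [rheeGlynnTerm, Nat.lt_succ_iff.mp (mem_range.mp hn)]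
  · rw [mem_range, not_lt] at hn
    simp [rheeGlynnTerm, show ¬n ≤ G ω by omega]

theorem tendsto_sum_range_rheeGlynnTerm (ω : Ω) :
    Tendsto (fun m => ∑ n ∈ range m, rheeGlynnTerm Δ G q n ω) atTop
      (𝓝 (∑ n ∈ range (G ω + 1), Δ n ω / q ^ n)) :=
  tendsto_const_nhds.congr'
    ((eventually_gt_atTop (G ω)).mono fun _ hm => (sum_range_rheeGlynnTerm_of_lt hm).symm)

variable [MeasurableSpace Ω] {μ : Measure Ω}

theorem memLp_rheeGlynnTerm {p : ENNReal} (hG : Measurable G) {n : ℕ} (hΔ : MemLp (Δ n) p μ) :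
    MemLp (rheeGlynnTerm Δ G q n) p μ := by
  have h : rheeGlynnTerm Δ G q n = fun ω => (q ^ n)⁻¹ * {ω | n ≤ G ω}.indicator (Δ n) ω := by
    funext ω
    by_cases hn : n ≤ G ω <;> simp [rheeGlynnTerm, hn, div_eq_inv_mul]
  rw [h]
  exact (hΔ.indicator (measurableSet_le measurable_const hG)).const_mul _

theorem integral_rheeGlynnTerm_mul (hΔ : ∀ n, Measurable (Δ n)) (hG : Measurable G)
    (hind : Indep (MeasurableSpace.comap G inferInstance)
      (⨆ n, MeasurableSpace.comap (Δ n) inferInstance) μ)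
    (htail : ∀ n, μ.real {ω | n ≤ G ω} = q ^ n) (hq : q ≠ 0) {n ℓ : ℕ} (hnℓ : n ≤ ℓ) :
    ∫ ω, rheeGlynnTerm Δ G q n ω * rheeGlynnTerm Δ G q ℓ ω ∂μ
      = (q ^ n)⁻¹ * ∫ ω, Δ n ω * Δ ℓ ω ∂μ := by
  have hΔm (k : ℕ) : Measurable[⨆ n, MeasurableSpace.comap (Δ n) inferInstance] (Δ k) :=
    (comap_measurable (Δ k)).mono (le_iSup (fun n => MeasurableSpace.comap (Δ n) _) k) le_rfl
  have hpoint (ω : Ω) : rheeGlynnTerm Δ G q n ω * rheeGlynnTerm Δ G q ℓ ω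
      = (if ℓ ≤ G ω then 1 else 0) * (Δ n ω * Δ ℓ ω) * ((q ^ n)⁻¹ * (q ^ ℓ)⁻¹) := by
    by_cases hℓ : ℓ ≤ G ω
    · simp [rheeGlynnTerm, hℓ, hnℓ.trans hℓ, div_eq_mul_inv]
      ring
    · simp [rheeGlynnTerm, hℓ]
  rw [integral_congr_ae (ae_of_all μ hpoint), integral_mul_const,
    integral_ite_le_mul_of_indep (Y := fun ω => Δ n ω * Δ ℓ ω) hG hind ((hΔm n).mul (hΔm ℓ))
      ((hΔ n).mul (hΔ ℓ)), htail]
  field_simp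

theorem integral_rheeGlynnTerm (hΔ : ∀ n, Measurable (Δ n)) (hG : Measurable G)
    (hind : Indep (MeasurableSpace.comap G inferInstance)
      (⨆ n, MeasurableSpace.comap (Δ n) inferInstance) μ)
    (htail : ∀ n, μ.real {ω | n ≤ G ω} = q ^ n) (hq : q ≠ 0) (n : ℕ) :
    ∫ ω, rheeGlynnTerm Δ G q n ω ∂μ = ∫ ω, Δ n ω ∂μ := by
  have hΔm : Measurable[⨆ n, MeasurableSpace.comap (Δ n) inferInstance] (Δ n) :=
    (comap_measurable (Δ n)).mono (le_iSup (fun n => MeasurableSpace.comap (Δ n) _) n) le_rfl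
  have hpoint (ω : Ω) : rheeGlynnTerm Δ G q n ω
      = (if n ≤ G ω then 1 else 0) * Δ n ω * (q ^ n)⁻¹ := by
    simp only [rheeGlynnTerm, div_eq_mul_inv, mul_comm (Δ n ω)]
  rw [integral_congr_ae (ae_of_all μ hpoint), integral_mul_const,
    integral_ite_le_mul_of_indep hG hind hΔm (hΔ n), htail]
  field_simp

end RheeGlynn

theorem summable_sqrt_of_eventually_le_geometric {a : ℕ → ℝ} {c ρ : ℝ} (hρ0 : 0 ≤ ρ)
    (hρ1 : ρ < 1) (ha : ∀ᶠ n in atTop, a n ≤ c * ρ ^ n) : Summable fun n => √(a n) := by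
  have hsqrtρ : √ρ < 1 := by
    rw [Real.sqrt_lt' one_pos]
    simpa using hρ1
  refine Summable.of_norm_bounded_eventually_nat
    ((summable_geometric_of_lt_one (Real.sqrt_nonneg ρ) hsqrtρ).mul_left √c) ?_
  filter_upwards [ha] with n hn
  have hpow : √(ρ ^ n) = √ρ ^ n := by
    rw [← Real.sqrt_sq (pow_nonneg (Real.sqrt_nonneg ρ) n), ← pow_mul, mul_comm, pow_mul,
      Real.sq_sqrt hρ0]
  rw [Real.norm_of_nonneg (Real.sqrt_nonneg _), ← hpow, ← Real.sqrt_mul' c (pow_nonneg hρ0 n)]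
  exact Real.sqrt_le_sqrt hn

section Moments

variable {Ω : Type*} [MeasurableSpace Ω] {μ : Measure Ω}

theorem memLp_two_of_integrable_abs_rpow [IsFiniteMeasure μ] {X : Ω → ℝ} {δ : ℝ} (hδ : 0 ≤ δ)
    (hX : AEStronglyMeasurable X μ) (hXint : Integrable (fun ω => |X ω| ^ (2 + δ)) μ) :
    MemLp X 2 μ := by
  have h2δ : (0 : ℝ) < 2 + δ := by linarith
  have hmem : MemLp X (ENNReal.ofReal (2 + δ)) μ :=
    (integrable_norm_rpow_iff hX (by simpa using h2δ) ENNReal.ofReal_ne_top).mp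
      (by simpa only [Real.norm_eq_abs, ENNReal.toReal_ofReal h2δ.le] using hXint)
  refine hmem.mono_exponent ?_
  rw [← ENNReal.ofReal_ofNat 2]
  exact ENNReal.ofReal_le_ofReal (by linarith)

theorem integral_sq_le_of_ae_eq_zero_off_s13 {X : Ω → ℝ} {s : Set Ω} {δ : ℝ} (hδ : 0 < δ)
    (hX : AEStronglyMeasurable X μ) (hXint : Integrable (fun ω => |X ω| ^ (2 + δ)) μ)
    (hs : MeasurableSet s) (hμs : μ s ≠ ⊤) (hXs : ∀ᵐ ω ∂μ, ω ∉ s → X ω = 0) :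
    ∫ ω, X ω ^ 2 ∂μ ≤ (∫ ω, |X ω| ^ (2 + δ) ∂μ) ^ (2 / (2 + δ)) * μ.real s ^ (δ / (2 + δ)) := by
  have h2δ : 0 < 2 + δ := by linarith
  have hconj : ((2 + δ) / 2).HolderConjugate ((2 + δ) / δ) := by
    rw [Real.holderConjugate_iff, inv_div, inv_div, ← add_div, div_self h2δ.ne']
    exact ⟨by rw [lt_div_iff₀ two_pos]; linarith, rfl⟩
  have hsq_rpow (ω : Ω) : (X ω ^ 2) ^ ((2 + δ) / 2) = |X ω| ^ (2 + δ) := by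
    rw [← sq_abs, ← Real.rpow_two, ← Real.rpow_mul (abs_nonneg _)]
    ring_nf
  have hX2 : MemLp (fun ω => X ω ^ 2) (ENNReal.ofReal ((2 + δ) / 2)) μ := by
    refine (integrable_norm_rpow_iff (hX.pow 2) (by simp; positivity) ENNReal.ofReal_ne_top).mp ?_
    refine hXint.congr (ae_of_all μ fun ω => ?_)
    simp only [Pi.pow_apply, Real.norm_eq_abs, abs_pow, sq_abs,
      ENNReal.toReal_ofReal (by positivity : 0 ≤ (2 + δ) / 2)]
    exact (hsq_rpow ω).symm
  have hind : MemLp (s.indicator 1) (ENNReal.ofReal ((2 + δ) / δ)) μ :=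
    memLp_indicator_const _ hs (1 : ℝ) (Or.inr hμs)
  have hind_rpow (ω : Ω) : s.indicator (1 : Ω → ℝ) ω ^ ((2 + δ) / δ) = s.indicator 1 ω := by
    by_cases hω : ω ∈ s
    · simp [hω]
    · simp [hω, Real.zero_rpow (by positivity : (2 + δ) / δ ≠ 0)]
  have hHolder := integral_mul_le_Lp_mul_Lq_of_nonneg (g := s.indicator 1) hconj
    (ae_of_all μ fun ω => sq_nonneg (X ω)) (ae_of_all μ fun ω => Set.indicator_nonneg
      (fun _ _ => zero_le_one) ω) hX2 hind
  simp only [hsq_rpow, hind_rpow, integral_indicator_one hs, one_div, inv_div] at hHolder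
  refine le_of_eq_of_le (integral_congr_ae ?_) hHolder
  filter_upwards [hXs] with ω hω
  by_cases hωs : ω ∈ s
  · simp [hωs]
  · simp [hωs, hω hωs]

theorem summable_sqrt_inv_pow_mul_integral_sq {Δ : ℕ → Ω → ℝ} {τ : Ω → ℕ∞} {δ θ q C : ℝ}
    {n₀ : ℕ} (hδ : 0 < δ) (hθ : 0 ≤ θ) (hθq : θ ^ (δ / (2 + δ)) < q) (hτ : Measurable τ)
    (hτtail : ∀ n : ℕ, 1 ≤ n → μ {ω | (n : ℕ∞) < τ ω} ≤ ENNReal.ofReal (θ ^ (n - 1)))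
    (hΔmeas : ∀ n, AEStronglyMeasurable (Δ n) μ)
    (hΔmom : ∀ n, Integrable (fun ω => |Δ n ω| ^ ((2 : ℝ) + δ)) μ)
    (hΔvanish : ∀ n : ℕ, 1 ≤ n → ∀ᵐ ω ∂μ, τ ω ≤ (n : ℕ∞) → Δ n ω = 0)
    (hΔbound : ∀ n, n₀ ≤ n → ∫ ω, |Δ n ω| ^ ((2 : ℝ) + δ) ∂μ ≤ C) :
    Summable fun n => √((q ^ n)⁻¹ * ∫ ω, Δ n ω ^ 2 ∂μ) := by
  set r := θ ^ (δ / (2 + δ))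
  have hr0 : 0 ≤ r := Real.rpow_nonneg hθ _
  have hq : 0 < q := hr0.trans_lt hθq
  rw [← summable_nat_add_iff 1]
  refine summable_sqrt_of_eventually_le_geometric (c := C ^ (2 / (2 + δ)) / q)
    (div_nonneg hr0 hq.le) ((div_lt_one hq).mpr hθq) ?_
  filter_upwards [eventually_ge_atTop n₀] with n hn
  have hs : MeasurableSet {ω | ((n + 1 : ℕ) : ℕ∞) < τ ω} :=
    hτ (MeasurableSet.of_discrete (s := {x : ℕ∞ | ((n + 1 : ℕ) : ℕ∞) < x}))
  have htail : μ {ω | ((n + 1 : ℕ) : ℕ∞) < τ ω} ≤ ENNReal.ofReal (θ ^ n) := by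
    simpa using hτtail (n + 1) (by omega)
  have hmoment : ∫ ω, Δ (n + 1) ω ^ 2 ∂μ ≤ C ^ (2 / (2 + δ)) * r ^ n := by
    refine (integral_sq_le_of_ae_eq_zero_off_s13 hδ (hΔmeas _) (hΔmom _) hs
      (ne_top_of_le_ne_top ENNReal.ofReal_ne_top htail) ?_).trans ?_
    · filter_upwards [hΔvanish (n + 1) (by omega)] with ω hω hωs using hω (not_lt.mp hωs)
    · rw [Real.rpow_pow_comm hθ]
      refine mul_le_mul_of_nonneg ?_ ?_ (by positivity) (by positivity)
      · exact Real.rpow_le_rpow (integral_nonneg fun _ => by positivity) (hΔbound _ (by omega))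
          (by positivity)
      · exact Real.rpow_le_rpow measureReal_nonneg
          (ENNReal.toReal_le_of_le_ofReal (pow_nonneg hθ n) htail) (by positivity)
  calc (q ^ (n + 1))⁻¹ * ∫ ω, Δ (n + 1) ω ^ 2 ∂μ
      ≤ (q ^ (n + 1))⁻¹ * (C ^ (2 / (2 + δ)) * r ^ n) := by gcongr
    _ = C ^ (2 / (2 + δ)) / q * (r / q) ^ n := by
      rw [div_pow, pow_succ]
      field_simp

end Moments

theorem rheeGlynn_truncated_estimator_general {Ω : Type*} [MeasurableSpace Ω]
    (μ : Measure Ω) [IsProbabilityMeasure μ]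
    (δ : ℝ) (hδ : 0 < δ) (ε : ℝ) (hε1 : ε < 1)
    (C : ℝ) (n₀ : ℕ) (p : ℝ) (hp0 : 0 < p) (hp1 : p < 1)
    (hpε : (1 - ε) ^ (δ / (2 + δ)) < 1 - p)
    (τ : Ω → ℕ∞) (hτ : Measurable τ)
    (hτtail : ∀ n : ℕ, 1 ≤ n → μ {ω | (n : ℕ∞) < τ ω} ≤ ENNReal.ofReal ((1 - ε) ^ (n - 1)))
    (Δ : ℕ → Ω → ℝ) (hΔmeas : ∀ n, Measurable (Δ n))
    (hΔmom : ∀ n, Integrable (fun ω => |Δ n ω| ^ ((2 : ℝ) + δ)) μ)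
    (hΔvanish : ∀ n : ℕ, 1 ≤ n → ∀ᵐ ω ∂μ, τ ω ≤ (n : ℕ∞) → Δ n ω = 0)
    (hΔbound : ∀ n, n₀ ≤ n → ∫ ω, |Δ n ω| ^ ((2 : ℝ) + δ) ∂μ ≤ C)
    (G : Ω → ℕ) (hG : Measurable G)
    (hGgeom : ∀ n : ℕ, μ {ω | G ω = n} = ENNReal.ofReal ((1 - p) ^ n * p))
    (hGindep : Indep (MeasurableSpace.comap G inferInstance)
      (⨆ n : ℕ, MeasurableSpace.comap (Δ n) inferInstance) μ)
    (Z : ℕ → Ω → ℝ)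
    (hZ_def : ∀ m ω, Z m ω
      = ∑ n ∈ Finset.range (m + 1), Δ n ω * (if n ≤ G ω then 1 else 0) / (1 - p) ^ n)
    (H : Ω → ℝ)
    (hH_def : ∀ ω, H ω = ∑ n ∈ Finset.range (G ω + 1), Δ n ω / (1 - p) ^ n) :
    MemLp H 2 μ
    ∧ (∀ᵐ ω ∂μ, Tendsto (fun m => Z m ω) atTop (nhds (H ω)))
    ∧ Tendsto (fun m => ∫ ω, (Z m ω - H ω) ^ 2 ∂μ) atTop (nhds 0)
    ∧ Summable (fun n => |∫ ω, Δ n ω ∂μ|)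
    ∧ ∫ ω, H ω ∂μ = ∑' n : ℕ, ∫ ω, Δ n ω ∂μ
    ∧ ∫ ω, (H ω) ^ 2 ∂μ
        = ∑' n : ℕ, ((1 - p) ^ n)⁻¹
            * ((∫ ω, (Δ n ω) ^ 2 ∂μ) + 2 * ∑' ℓ : ℕ, ∫ ω, Δ n ω * Δ (n + 1 + ℓ) ω ∂μ) := by
  have hq : (1 - p) ≠ 0 := by linarith
  set f := rheeGlynnTerm Δ G (1 - p)
  have htail := measureReal_setOf_le_eq_pow_of_geometric hG hp0 hp1.le hGgeom
  have hcov {n ℓ : ℕ} (hnℓ : n ≤ ℓ) :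
      ∫ ω, f n ω * f ℓ ω ∂μ = ((1 - p) ^ n)⁻¹ * ∫ ω, Δ n ω * Δ ℓ ω ∂μ :=
    integral_rheeGlynnTerm_mul hΔmeas hG hGindep htail hq hnℓ
  have hsq (n : ℕ) : ∫ ω, f n ω ^ 2 ∂μ = ((1 - p) ^ n)⁻¹ * ∫ ω, Δ n ω ^ 2 ∂μ := by
    simpa only [sq] using hcov le_rfl
  have hf2 (n : ℕ) : MemLp (f n) 2 μ := memLp_rheeGlynnTerm hG
    (memLp_two_of_integrable_abs_rpow hδ.le (hΔmeas n).aestronglyMeasurable (hΔmom n))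
  have hsum : Summable fun n => √(∫ ω, f n ω ^ 2 ∂μ) := by
    simpa only [hsq] using summable_sqrt_inv_pow_mul_integral_sq hδ (by linarith) hpε hτ hτtail
      (fun n => (hΔmeas n).aestronglyMeasurable) hΔmom hΔvanish hΔbound
  have hH : ∀ᵐ ω ∂μ, Tendsto (fun m => ∑ n ∈ range m, f n ω) atTop (𝓝 (H ω)) :=
    ae_of_all μ fun ω => by simpa only [hH_def] using tendsto_sum_range_rheeGlynnTerm ω
  have hZ : Z = fun m ω => ∑ n ∈ range (m + 1), f n ω := funext₂ hZ_def
  have hmean (n : ℕ) : ∫ ω, f n ω ∂μ = ∫ ω, Δ n ω ∂μ :=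
    integral_rheeGlynnTerm hΔmeas hG hGindep htail hq n
  refine ⟨memLp_two_of_ae_tendsto_sum hf2 hsum hH, ?_, ?_, ?_, ?_, ?_⟩
  · filter_upwards [hH] with ω hω
    simpa only [hZ, Function.comp_def] using hω.comp (tendsto_add_atTop_nat 1)
  · simpa only [hZ, Function.comp_def] using
      (tendsto_integral_sq_sub_of_ae_tendsto_sum hf2 hsum hH).comp (tendsto_add_atTop_nat 1)
  · simpa only [hmean] using summable_abs_integral_of_summable_sqrt hf2 hsum
  · simpa only [hmean] using (hasSum_integral_of_ae_tendsto_sum hf2 hsum hH).tsum_eq.symm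
  · rw [integral_sq_eq_tsum_of_ae_tendsto_sum hf2 hsum hH]
    refine tsum_congr fun n => ?_
    rw [hsq, tsum_congr fun k => hcov (by omega : n ≤ n + 1 + k), tsum_mul_left]
    ring

/-- Properties of the generalized Rhee--Glynn estimator `H = ∑_{n=0}^G Δₙ / (1-p)^n` with a
Geometric truncation variable `G` independent of `(Δₙ)` (Assumption 4): `H` is
square-integrable, the partial sums `Zₘ = ∑_{n=0}^m Δₙ 1{n ≤ G}/(1-p)^n` converge to `H`
almost surely and in `L²(ℙ)`, `E[H] = ∑ₙ E[Δₙ]` with the series converging absolutely, and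
`E[H²] = ∑ₙ (1-p)^{-n} (E[Δₙ²] + 2 ∑_{ℓ>n} E[Δₙ Δ_ℓ])`. -/
theorem rheeGlynn_truncated_estimator {Ω : Type*} [MeasurableSpace Ω]
    (μ : Measure Ω) [IsProbabilityMeasure μ]
    (δ : ℝ) (hδ : 0 < δ) (ε : ℝ) (hε0 : 0 < ε) (hε1 : ε < 1)
    (C : ℝ) (n₀ : ℕ) (p : ℝ) (hp0 : 0 < p) (hp1 : p < 1)
    (hpε : (1 - ε) ^ (δ / (2 + δ)) < 1 - p)
    (τ : Ω → ℕ∞) (hτ : Measurable τ)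
    (hτtail : ∀ n : ℕ, 1 ≤ n → μ {ω | (n : ℕ∞) < τ ω} ≤ ENNReal.ofReal ((1 - ε) ^ (n - 1)))
    (Δ : ℕ → Ω → ℝ) (hΔmeas : ∀ n, Measurable (Δ n))
    (hΔmom : ∀ n, Integrable (fun ω => |Δ n ω| ^ ((2 : ℝ) + δ)) μ)
    (hΔvanish : ∀ n : ℕ, 1 ≤ n → ∀ᵐ ω ∂μ, τ ω ≤ (n : ℕ∞) → Δ n ω = 0)
    (hΔbound : ∀ n, n₀ ≤ n → ∫ ω, |Δ n ω| ^ ((2 : ℝ) + δ) ∂μ ≤ C)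
    (G : Ω → ℕ) (hG : Measurable G)
    (hGgeom : ∀ n : ℕ, μ {ω | G ω = n} = ENNReal.ofReal ((1 - p) ^ n * p))
    (hGindep : Indep (MeasurableSpace.comap G inferInstance)
      (⨆ n : ℕ, MeasurableSpace.comap (Δ n) inferInstance) μ)
    (Z : ℕ → Ω → ℝ)
    (hZ_def : ∀ m ω, Z m ω
      = ∑ n ∈ Finset.range (m + 1), Δ n ω * (if n ≤ G ω then 1 else 0) / (1 - p) ^ n)
    (H : Ω → ℝ)
    (hH_def : ∀ ω, H ω = ∑ n ∈ Finset.range (G ω + 1), Δ n ω / (1 - p) ^ n) :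
    MemLp H 2 μ
    ∧ (∀ᵐ ω ∂μ, Tendsto (fun m => Z m ω) atTop (nhds (H ω)))
    ∧ Tendsto (fun m => ∫ ω, (Z m ω - H ω) ^ 2 ∂μ) atTop (nhds 0)
    ∧ Summable (fun n => |∫ ω, Δ n ω ∂μ|)
    ∧ ∫ ω, H ω ∂μ = ∑' n : ℕ, ∫ ω, Δ n ω ∂μ
    ∧ ∫ ω, (H ω) ^ 2 ∂μ
        = ∑' n : ℕ, ((1 - p) ^ n)⁻¹
            * ((∫ ω, (Δ n ω) ^ 2 ∂μ) + 2 * ∑' ℓ : ℕ, ∫ ω, Δ n ω * Δ (n + 1 + ℓ) ω ∂μ) :=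
  rheeGlynn_truncated_estimator_general μ δ hδ ε hε1 C n₀ p hp0 hp1 hpε τ hτ hτtail Δ hΔmeas hΔmom
    hΔvanish hΔbound G hG hGgeom hGindep Z hZ_def H hH_def
end

section
/- Let a, b : ℕ → ℝ be sequences and let τ ≥ 2 be a natural number such that a n = b (n−1) for every n ≥ τ. For each m, set H_{m,∞} = a m + ∑_{n=m+1}^{τ−1} (a n − b (n−1)) (with the sum empty if τ ≤ m+1). Let m ∈ ℕ and let α : ℕ → ℝ satisfy ∑_{n=0}^{m} α n = 1. Then ∑_{n=0}^{m} α n · H_{n,∞} = ∑_{n=0}^{m} α n · a n + ∑_{n=1}^{τ−1} β n · (a n − b (n−1)), where β n = ∑_{j=0}^{min(n−1, m)} α j. -/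
open Finset

/-- The averaged unbiased estimator of Appendix D: with `H_{n,∞} = a n + ∑_{k=n+1}^{τ-1}
(a k - b (k-1))` and weights `α` summing to one over `{0, …, m}`,
`∑_{n=0}^m α n H_{n,∞} = ∑_{n=0}^m α n a n + ∑_{n=1}^{τ-1} β n (a n - b (n-1))`, where
`β n = ∑_{j=0}^{min (n-1) m} α j`. -/
theorem averaged_estimator (a b : ℕ → ℝ) (τ : ℕ) (hτ : 2 ≤ τ)
    (hmeet : ∀ n, τ ≤ n → a n = b (n - 1))
    (m : ℕ) (α : ℕ → ℝ) (hα : ∑ n ∈ Finset.range (m + 1), α n = 1) :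
    ∑ n ∈ Finset.range (m + 1),
        α n * (a n + ∑ k ∈ Finset.Icc (n + 1) (τ - 1), (a k - b (k - 1)))
      = (∑ n ∈ Finset.range (m + 1), α n * a n)
        + ∑ n ∈ Finset.Icc 1 (τ - 1),
            (∑ j ∈ Finset.range (min (n - 1) m + 1), α j) * (a n - b (n - 1)) := by
  simp only [mul_add, Finset.sum_add_distrib, Finset.mul_sum, Finset.sum_mul]
  congr 1
  exact Finset.sum_comm' (fun n k => by simp [Nat.lt_succ_iff]; omega)
end
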